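/- Let k be an integer with k ∉ {0,1}, and let S be an open neighborhood of I_n in D_n(ℂ) consisting of invertible matrices. Two maps φ, ψ : D_n(ℂ) → D_n(ℂ) with ψ complex linear satisfy tr(φ(A)ψ(B)^k) = tr(AB^k) for all A ∈ D_n(ℂ) and all B ∈ S if and only if there exist an invertible diagonal matrix C ∈ D_n(ℂ) and a permutation matrix P ∈ M_n(ℂ) such that φ(A) = PC^{-k}AP⁻¹ and ψ(B) = PCBP⁻¹ for all A, B ∈ D_n(ℂ). -/

import Mathlib

/-!
Identify diagonal matrices with vectors, so that `ψ` becomes a matrix `M` and the trace condition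
reads `φ(a) ⬝ᵥ (M b) ^ k = a ⬝ᵥ b ^ k` for all `a` and all `b` near `1`. (For `k < 0` this needs
`ψ(B)` invertible, which holds because otherwise `ψ(B) ^ k = 0`.) The monomials `b ↦ b j ^ k` are
linearly independent near `1` (differentiate along the `j`-th coordinate), so testing with
`a = e_j` shows that the `n` functions `b ↦ (M b) i ^ k` span the same space:
`(M b) ^ k = D b ^ k` with `D` invertible. In one row, an identity
`(μ s + β) ^ k = d s ^ k + c` for `s` near `1` with `μ ≠ 0` forces `β = 0` when `k ∉ {0, 1}`, since
it is a polynomial identity after clearing denominators. Hence every row of `M` has exactly one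
nonzero entry, and since `D` is invertible their positions form a permutation `σ`. Independence of
the monomials once more determines `φ`.
-/

open Matrix Filter Topology Function

section
variable {R ι : Type*} [Fintype ι] [DecidableEq ι] [NonUnitalNonAssocSemiring R]

theorem dotProduct_update (x w : ι → R) (j : ι) (c : R) :
    x ⬝ᵥ update w j c = x j * c + update x j 0 ⬝ᵥ w := by
  have hw : update w j c = Pi.single j c + update w j 0 := by
    ext i; rcases eq_or_ne i j with rfl | hi <;> simp [*]
  rw [hw, dotProduct_add, dotProduct_single]
  exact congrArg _ <| Finset.sum_congr rfl fun i _ => by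
    rcases eq_or_ne i j with rfl | hi <;> simp [*]

end

theorem update_zpow {ι K : Type*} [DecidableEq ι] [DivInvMonoid K] (v : ι → K) (j : ι) (s : K)
    (k : ℤ) : update v j s ^ k = update (v ^ k) j (s ^ k) := by
  ext i; rcases eq_or_ne i j with rfl | hi <;> simp [*]

open Polynomial in
theorem eq_zero_of_forall_zpow_add_eq {K : Type*} [Field K] [CharZero K] {k : ℤ} (hk0 : k ≠ 0)
    (hk1 : k ≠ 1) {μ β d c : K} (hμ : μ ≠ 0) {T : Set K} (hT : T.Infinite)
    (h : ∀ s ∈ T, (μ * s + β) ^ k = d * s ^ k + c) : β = 0 := by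
  obtain ⟨m, rfl | rfl⟩ := k.eq_nat_or_neg
  · have hm : 2 ≤ m := by omega
    have hp : (C μ * X + C β) ^ m - (C d * X ^ m + C c) = 0 :=
      eq_zero_of_infinite_isRoot _ <| hT.mono fun s hs => by simpa [sub_eq_zero] using h s hs
    -- as `m ≥ 2`, the derivative at `0` is `m * μ * β ^ (m - 1)`
    have hder := congrArg (fun p => (derivative p).eval 0) hp
    simp [derivative_pow, zero_pow (show m - 1 ≠ 0 by omega), hμ, show m ≠ 0 by omega] at hder
    exact hder.1
  · have hm : m ≠ 0 := by omega
    have hp : X ^ m - (C d + C c * X ^ m) * (C μ * X + C β) ^ m = 0 := by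
      refine eq_zero_of_infinite_isRoot _ <| (hT.sdiff (Set.toFinite {0, -β / μ})).mono ?_
      rintro s ⟨hs, hs'⟩
      have hs0 : s ≠ 0 := fun h => hs' (by simp [h])
      have hsβ : μ * s + β ≠ 0 := fun h => hs' <| Set.mem_insert_of_mem _ <|
        Set.mem_singleton_iff.2 <| by field_simp; linear_combination h
      have := h s hs
      simp only [_root_.zpow_neg, zpow_natCast] at this
      field_simp at this
      simp only [Set.mem_ofPred_eq, IsRoot, eval_sub, eval_mul, eval_add, eval_pow, eval_C, eval_X]
      linear_combination this
    -- evaluating at the root `-β / μ` of `μ X + β`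
    have hev := congrArg (Polynomial.eval (-β / μ)) hp
    simp only [eval_sub, eval_mul, eval_add, eval_pow, eval_C, eval_X, eval_zero] at hev
    rw [mul_div_cancel₀ _ hμ, neg_add_cancel, zero_pow hm, mul_zero, sub_zero] at hev
    simpa [hμ] using pow_eq_zero_iff hm |>.mp hev

section
variable {𝕜 ι : Type*} [NontriviallyNormedField 𝕜] [CharZero 𝕜] [Fintype ι] [DecidableEq ι]
  {k : ℤ}

theorem eq_of_eventually_dotProduct_zpow_eq (hk : k ≠ 0) {x y : ι → 𝕜}
    (h : ∀ᶠ b in 𝓝 1, x ⬝ᵥ b ^ k = y ⬝ᵥ b ^ k) : x = y := by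
  rw [← sub_eq_zero]
  ext j
  set z := x - y
  have hupdate : Tendsto (update (1 : ι → 𝕜) j) (𝓝 1) (𝓝 1) := by
    simpa using ((continuous_const (y := (1 : ι → 𝕜))).update j continuous_id).tendsto (1 : 𝕜)
  have hz : (fun t => z j * t ^ k + update z j 0 ⬝ᵥ (1 : ι → 𝕜)) =ᶠ[𝓝 1] fun _ => 0 := by
    filter_upwards [hupdate.eventually h] with t ht
    have hzt : z ⬝ᵥ update (1 : ι → 𝕜) j t ^ k = 0 := by rw [sub_dotProduct, ht, sub_self]
    rwa [update_zpow, dotProduct_update, _root_.one_zpow] at hzt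
  have hderiv : HasDerivAt (fun t => z j * t ^ k + update z j 0 ⬝ᵥ (1 : ι → 𝕜)) (z j * k) 1 := by
    simpa using ((hasDerivAt_zpow k (1 : 𝕜) (Or.inl one_ne_zero)).const_mul (z j)).add_const
      (update z j 0 ⬝ᵥ (1 : ι → 𝕜))
  simpa [hk] using hderiv.unique ((hasDerivAt_const (1 : 𝕜) (0 : 𝕜)).congr_of_eventuallyEq hz)

theorem eq_single_of_eventually_zpow_dotProduct_eq (hk0 : k ≠ 0) (hk1 : k ≠ 1) {m d : ι → 𝕜}
    {j : ι} (hj : m j ≠ 0) (h : ∀ᶠ b in 𝓝 1, (m ⬝ᵥ b) ^ k = d ⬝ᵥ b ^ k) :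
    m = Pi.single j (m j) := by
  have hupdate : Tendsto (fun p : (ι → 𝕜) × 𝕜 => update p.1 j p.2) (𝓝 1 ×ˢ 𝓝 1) (𝓝 1) := by
    rw [← nhds_prod_eq]
    simpa using (continuous_update j).tendsto ((1 : ι → 𝕜), (1 : 𝕜))
  -- vary the `j`-th coordinate of `b` alone
  have hrest : ∀ᶠ v in 𝓝 1, update m j 0 ⬝ᵥ v ^ (1 : ℤ) = 0 ⬝ᵥ v ^ (1 : ℤ) := by
    filter_upwards [(hupdate.eventually h).curry] with v hv
    rw [zpow_one, zero_dotProduct]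
    refine eq_zero_of_forall_zpow_add_eq (d := d j) (c := update d j 0 ⬝ᵥ v ^ k) hk0 hk1 hj
      (infinite_of_mem_nhds 1 hv) fun s hs => ?_
    rwa [Set.mem_ofPred_eq, dotProduct_update, update_zpow, dotProduct_update] at hs
  have hzero := eq_of_eventually_dotProduct_zpow_eq one_ne_zero hrest
  calc m = update (update m j 0) j (m j) := by rw [update_idem, update_eq_self]
    _ = Pi.single j (m j) := by rw [hzero]; rfl

theorem exists_eq_single_of_eventually_zpow_dotProduct_eq (hk0 : k ≠ 0) (hk1 : k ≠ 1)
    {m d : ι → 𝕜} (hd : d ≠ 0) (h : ∀ᶠ b in 𝓝 1, (m ⬝ᵥ b) ^ k = d ⬝ᵥ b ^ k) :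
    ∃ j, m j ≠ 0 ∧ m = Pi.single j (m j) ∧ d = Pi.single j (m j ^ k) := by
  obtain ⟨j, hj⟩ : ∃ j, m j ≠ 0 := by
    by_contra! hm
    refine hd (eq_of_eventually_dotProduct_zpow_eq hk0 (h.mono fun b hb => ?_))
    rw [← hb, funext hm, ← Pi.zero_def, zero_dotProduct, zero_dotProduct, _root_.zero_zpow k hk0]
  have hm := eq_single_of_eventually_zpow_dotProduct_eq hk0 hk1 hj h
  refine ⟨j, hj, hm, eq_of_eventually_dotProduct_zpow_eq hk0 (h.mono fun b hb => ?_)⟩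
  rw [← hb, hm, single_dotProduct, single_dotProduct, Pi.single_eq_same, mul_zpow, Pi.pow_apply]

theorem exists_isUnit_det_mulVec_zpow_eq (hk : k ≠ 0) {f : (ι → 𝕜) → ι → 𝕜}
    {M : Matrix ι ι 𝕜} (h : ∀ a, ∀ᶠ b in 𝓝 1, f a ⬝ᵥ (M *ᵥ b) ^ k = a ⬝ᵥ b ^ k) :
    ∃ D : Matrix ι ι 𝕜, IsUnit D.det ∧ ∀ᶠ b in 𝓝 1, (M *ᵥ b) ^ k = D *ᵥ b ^ k := by
  set G : Matrix ι ι 𝕜 := .of fun j => f (Pi.single j 1)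
  have hG : ∀ᶠ b in 𝓝 1, G *ᵥ (M *ᵥ b) ^ k = b ^ k := by
    filter_upwards [eventually_all.2 fun j => h (Pi.single j 1)] with b hb
    ext j
    simpa [G, mulVec] using hb j
  have hGdet : IsUnit G.det := by
    refine isUnit_iff_ne_zero.2 fun h0 => ?_
    obtain ⟨x, hx, hxG⟩ := exists_vecMul_eq_zero_iff.2 h0
    refine hx (eq_of_eventually_dotProduct_zpow_eq hk (hG.mono fun b hb => ?_))
    rw [← hb, dotProduct_mulVec, hxG, zero_dotProduct, zero_dotProduct]
  refine ⟨G⁻¹, isUnit_nonsing_inv_det G hGdet, hG.mono fun b hb => ?_⟩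
  rw [← hb, mulVec_mulVec, nonsing_inv_mul G hGdet, one_mulVec]

theorem exists_perm_mulVec_eq_of_eventually_zpow (hk0 : k ≠ 0) (hk1 : k ≠ 1)
    {M D : Matrix ι ι 𝕜} (hD : IsUnit D.det) (h : ∀ᶠ b in 𝓝 1, (M *ᵥ b) ^ k = D *ᵥ b ^ k) :
    ∃ (σ : Equiv.Perm ι) (c : ι → 𝕜), (∀ j, c j ≠ 0) ∧ ∀ b, M *ᵥ b = (c * b) ∘ σ := by
  have hrow (i : ι) :
      ∃ j, M i j ≠ 0 ∧ M i = Pi.single j (M i j) ∧ D i = Pi.single j (M i j ^ k) :=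
    exists_eq_single_of_eventually_zpow_dotProduct_eq hk0 hk1
      (fun hi => hD.ne_zero (det_eq_zero_of_row_eq_zero i (congrFun hi)))
      (h.mono fun b hb => congrFun hb i)
  choose τ hτ hMτ hDτ using hrow
  have hτsurj : Surjective τ := fun j => by
    by_contra! hj
    refine hD.ne_zero (det_eq_zero_of_column_eq_zero j fun i => ?_)
    rw [hDτ i, Pi.single_eq_of_ne (hj i).symm]
  set σ := Equiv.ofBijective τ hτsurj.bijective_of_finite
  refine ⟨σ, fun j => M (σ.symm j) j, fun j => ?_, fun b => ?_⟩
  · simpa only [show τ (σ.symm j) = j from σ.apply_symm_apply j] using hτ (σ.symm j)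
  · ext i
    rw [mulVec, hMτ i, single_dotProduct]
    simp [σ]

theorem exists_perm_of_eventually_dotProduct_zpow_eq (hk0 : k ≠ 0) (hk1 : k ≠ 1)
    {f : (ι → 𝕜) → ι → 𝕜} {M : Matrix ι ι 𝕜}
    (h : ∀ a, ∀ᶠ b in 𝓝 1, f a ⬝ᵥ (M *ᵥ b) ^ k = a ⬝ᵥ b ^ k) :
    ∃ (σ : Equiv.Perm ι) (c : ι → 𝕜), (∀ j, c j ≠ 0) ∧ (∀ b, M *ᵥ b = (c * b) ∘ σ) ∧
      ∀ a, f a = (c ^ (-k) * a) ∘ σ := by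
  obtain ⟨D, hD, hMD⟩ := exists_isUnit_det_mulVec_zpow_eq hk0 h
  obtain ⟨σ, c, hc, hM⟩ := exists_perm_mulVec_eq_of_eventually_zpow hk0 hk1 hD hMD
  refine ⟨σ, c, hc, hM, fun a => ?_⟩
  have hfa : f a ∘ σ.symm * c ^ k = a :=
    eq_of_eventually_dotProduct_zpow_eq hk0 <| (h a).mono fun b hb => by
      rw [← hb, hM, dotProduct, dotProduct, ← Equiv.sum_comp σ]
      simp [mul_zpow, mul_assoc]
  ext i
  have hi := congrFun hfa (σ i)
  simp only [Pi.mul_apply, Function.comp_apply, Equiv.symm_apply_apply, Pi.pow_apply] at hi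
  simp only [Function.comp_apply, Pi.mul_apply, Pi.pow_apply, Pi.inv_apply, ← hi, _root_.zpow_neg]
  field_simp [hc]

end

section
variable {n K : Type*} [Fintype n] [DecidableEq n] [Field K] {k : ℤ}

theorem diagonal_zpow {v : n → K} (h : (∀ i, v i ≠ 0) ∨ 0 ≤ k) :
    diagonal v ^ k = diagonal (v ^ k) := by
  rcases h with hv | hk
  · obtain ⟨m, rfl | rfl⟩ := k.eq_nat_or_neg
    · simp [diagonal_pow]
    · rw [zpow_neg_natCast, _root_.zpow_neg, zpow_natCast, diagonal_pow]
      refine inv_eq_left_inv ?_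
      rw [diagonal_mul_diagonal, ← diagonal_one]
      congr with i
      simp [hv]
  · lift k to ℕ using hk
    simp [diagonal_pow]

theorem zpow_eq_zero_of_not_isUnit {A : Matrix n n K} (hA : ¬IsUnit A) (hk : k < 0) :
    A ^ k = 0 := by
  obtain ⟨m, rfl⟩ := Int.eq_negSucc_of_lt_zero hk
  rw [zpow_negSucc, nonsing_inv_apply_not_isUnit]
  rwa [← isUnit_iff_isUnit_det, isUnit_pow_succ_iff]

theorem trace_diagonal_mul_diagonal_zpow (x : n → K) {w : n → K} (h : (∀ i, w i ≠ 0) ∨ 0 ≤ k) :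
    (diagonal x * diagonal w ^ k).trace = x ⬝ᵥ w ^ k := by
  rw [diagonal_zpow h, diagonal_mul_diagonal, trace_diagonal]
  rfl

theorem permMatrix_mul_diagonal_mul_diagonal_mul_inv (σ : Equiv.Perm n) (u v : n → K) :
    σ.permMatrix K * diagonal u * diagonal v * (σ.permMatrix K)⁻¹ = diagonal ((u * v) ∘ σ) := by
  have hinv : (σ.permMatrix K)⁻¹ = σ⁻¹.permMatrix K :=
    inv_eq_right_inv (by rw [← permMatrix_mul, inv_mul_cancel, permMatrix_one])
  rw [hinv, mul_assoc _ (diagonal u), diagonal_mul_diagonal, PEquiv.toMatrix_toPEquiv_mul,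
    PEquiv.mul_toMatrix_toPEquiv, Equiv.Perm.inv_def, Equiv.symm_symm, submatrix_submatrix]
  exact submatrix_diagonal_equiv _ σ

theorem isUnit_diagonal_iff_forall_ne_zero {v : n → K} : IsUnit (diagonal v) ↔ ∀ i, v i ≠ 0 := by
  simp [isUnit_diagonal, Pi.isUnit_iff]

theorem exists_diagonal_mulVec_eq {ψ : Matrix n n K → Matrix n n K} (hψlin : IsLinearMap K ψ)
    (hψdiag : ∀ A, A.IsDiag → (ψ A).IsDiag) :
    ∃ M : Matrix n n K, ∀ b, ψ (diagonal b) = diagonal (M *ᵥ b) :=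
  ⟨LinearMap.toMatrix' (diagLinearMap n K K ∘ₗ hψlin.mk' ψ ∘ₗ diagonalLinearMap n K K), fun b => by
    rw [LinearMap.toMatrix'_mulVec]
    exact (hψdiag _ (isDiag_diagonal b)).diagonal_diag.symm⟩

theorem dotProduct_mulVec_zpow_eq_of_trace_eq [CharZero K] {φ ψ : Matrix n n K → Matrix n n K}
    {S : Set (Matrix n n K)} {M : Matrix n n K} (hSinv : ∀ B ∈ S, IsUnit B)
    (hφdiag : ∀ A, A.IsDiag → (φ A).IsDiag) (hψM : ∀ b, ψ (diagonal b) = diagonal (M *ᵥ b))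
    (h : ∀ A, A.IsDiag → ∀ B ∈ S, (φ A * ψ B ^ k).trace = (A * B ^ k).trace)
    {b : n → K} (hb : diagonal b ∈ S) (a : n → K) :
    (φ (diagonal a)).diag ⬝ᵥ (M *ᵥ b) ^ k = a ⬝ᵥ b ^ k := by
  have hb0 := isUnit_diagonal_iff_forall_ne_zero.1 (hSinv _ hb)
  -- for `k < 0`, a singular `ψ B` would give `ψ B ^ k = 0`, but `tr (B ^ (-k) * B ^ k) = card n`
  have hMb : (∀ i, (M *ᵥ b) i ≠ 0) ∨ 0 ≤ k := by
    refine (lt_or_ge k 0).imp (fun hk i hi => ?_) id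
    have htr := h _ (isDiag_diagonal (b ^ (-k))) _ hb
    rw [hψM, zpow_eq_zero_of_not_isUnit
      (fun hu => isUnit_diagonal_iff_forall_ne_zero.1 hu i hi) hk, mul_zero, trace_zero,
      trace_diagonal_mul_diagonal_zpow _ (Or.inl hb0)] at htr
    have : Nonempty n := ⟨i⟩
    simp [dotProduct, zpow_ne_zero, hb0, eq_comm] at htr
  have htr := h _ (isDiag_diagonal a) _ hb
  rwa [← (hφdiag _ (isDiag_diagonal a)).diagonal_diag, hψM,
    trace_diagonal_mul_diagonal_zpow _ hMb, trace_diagonal_mul_diagonal_zpow _ (Or.inl hb0)] at htr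

theorem trace_permMatrix_conj_mul_zpow (σ : Equiv.Perm n) {c b : n → K} (hc : ∀ i, c i ≠ 0)
    (hb : ∀ i, b i ≠ 0) (a : n → K) :
    (σ.permMatrix K * diagonal c ^ (-k) * diagonal a * (σ.permMatrix K)⁻¹ *
      (σ.permMatrix K * diagonal c * diagonal b * (σ.permMatrix K)⁻¹) ^ k).trace =
    (diagonal a * diagonal b ^ k).trace := by
  rw [diagonal_zpow (Or.inl hc), permMatrix_mul_diagonal_mul_diagonal_mul_inv,
    permMatrix_mul_diagonal_mul_diagonal_mul_inv,
    trace_diagonal_mul_diagonal_zpow (w := (c * b) ∘ σ) _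
      (Or.inl fun i => mul_ne_zero (hc (σ i)) (hb (σ i))),
    trace_diagonal_mul_diagonal_zpow _ (Or.inl hb)]
  refine (comp_equiv_dotProduct_comp_equiv _ ((c * b) ^ k) σ).trans ?_
  simp only [dotProduct, Pi.mul_apply, Pi.pow_apply, Pi.inv_apply, mul_zpow, _root_.zpow_neg]
  exact Finset.sum_congr rfl fun i _ => by field_simp [hc i]

end

/-- Trace of `k`-power-product preservers on diagonal matrices: the trace
condition (with `ψ` complex linear) holds iff `φ(A) = P C^{-k} A P⁻¹` and
`ψ(B) = P C B P⁻¹` for an invertible diagonal `C` and a permutation matrix `P`. -/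
theorem stmt_17 (n : ℕ) (k : ℤ) (hk0 : k ≠ 0) (hk1 : k ≠ 1)
    (S : Set (Matrix (Fin n) (Fin n) ℂ))
    (hSopen : ∃ U : Set (Matrix (Fin n) (Fin n) ℂ), IsOpen U ∧
      S = U ∩ {A : Matrix (Fin n) (Fin n) ℂ | A.IsDiag})
    (hS1 : 1 ∈ S) (hSinv : ∀ A ∈ S, IsUnit A)
    (φ ψ : Matrix (Fin n) (Fin n) ℂ → Matrix (Fin n) (Fin n) ℂ)
    (hφdiag : ∀ A : Matrix (Fin n) (Fin n) ℂ, A.IsDiag → (φ A).IsDiag)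
    (hψdiag : ∀ A : Matrix (Fin n) (Fin n) ℂ, A.IsDiag → (ψ A).IsDiag)
    (hψlin : IsLinearMap ℂ ψ) :
    (∀ A : Matrix (Fin n) (Fin n) ℂ, A.IsDiag →
      ∀ B ∈ S, (φ A * ψ B ^ k).trace = (A * B ^ k).trace) ↔
    ∃ (C P : Matrix (Fin n) (Fin n) ℂ) (σ : Equiv.Perm (Fin n)),
      C.IsDiag ∧ IsUnit C ∧ P = σ.permMatrix ℂ ∧
      (∀ A : Matrix (Fin n) (Fin n) ℂ, A.IsDiag → φ A = P * C ^ (-k) * A * P⁻¹) ∧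
      (∀ B : Matrix (Fin n) (Fin n) ℂ, B.IsDiag → ψ B = P * C * B * P⁻¹) := by
  obtain ⟨U, hU, rfl⟩ := hSopen
  obtain ⟨M, hψM⟩ := exists_diagonal_mulVec_eq hψlin hψdiag
  constructor
  · intro h
    have hS : ∀ᶠ b in 𝓝 (1 : Fin n → ℂ), diagonal b ∈ U ∩ {A | A.IsDiag} :=
      ((continuous_id.matrix_diagonal.tendsto 1).eventually
        (hU.mem_nhds (by simpa using hS1.1))).mono fun b hb => ⟨hb, isDiag_diagonal b⟩
    obtain ⟨σ, c, hc, hM, hf⟩ := exists_perm_of_eventually_dotProduct_zpow_eq hk0 hk1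
      fun a => hS.mono fun b hb => dotProduct_mulVec_zpow_eq_of_trace_eq hSinv hφdiag hψM h hb a
    refine ⟨diagonal c, _, σ, isDiag_diagonal c, isUnit_diagonal_iff_forall_ne_zero.2 hc, rfl,
      fun A hA => ?_, fun B hB => ?_⟩
    · rw [← hA.diagonal_diag, ← (hφdiag _ (isDiag_diagonal _)).diagonal_diag, hf,
        diagonal_zpow (Or.inl hc), permMatrix_mul_diagonal_mul_diagonal_mul_inv]
    · rw [← hB.diagonal_diag, hψM, hM, permMatrix_mul_diagonal_mul_diagonal_mul_inv]
  · rintro ⟨C, _, σ, hC, hCu, rfl, hφ, hψ⟩ A hA B hB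
    obtain ⟨a, rfl⟩ : ∃ a, A = diagonal a := ⟨_, hA.diagonal_diag.symm⟩
    obtain ⟨b, rfl⟩ : ∃ b, B = diagonal b := ⟨_, hB.2.diagonal_diag.symm⟩
    obtain ⟨c, rfl⟩ : ∃ c, C = diagonal c := ⟨_, hC.diagonal_diag.symm⟩
    rw [hφ _ hA, hψ _ hB.2]
    exact trace_permMatrix_conj_mul_zpow σ (isUnit_diagonal_iff_forall_ne_zero.1 hCu)
      (isUnit_diagonal_iff_forall_ne_zero.1 (hSinv _ hB)) a
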